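/- Let X₁, X₀, Y₁, Y₀ be vector spaces over a field R, let d : X₁ → X₀ and d̄ : Y₁ → Y₀ be linear maps, and let ρ₁ : X₁ → Y₁ and ρ₀ : X₀ → Y₀ be surjective linear maps satisfying the cochain-map condition ρ₀ ∘ d = d̄ ∘ ρ₁. Let l₂ : X₀ × X₀ → X₀ be a skew-symmetric bilinear map such that: (a) l₂(d k, h) ∈ range d for all k ∈ X₁, h ∈ X₀; (b) the Jacobiator J(x,y,z) of l₂ lies in range d for all x, y, z ∈ X₀; and (c) whenever ρ₀(α) = ρ₀(α′), one has ρ₀(l₂(α, β)) = ρ₀(l₂(α′, β)) for all β. Then there is a unique skew-symmetric bilinear map l̂₂ : Y₀ × Y₀ → Y₀ with l̂₂(ρ₀ α, ρ₀ β) = ρ₀(l₂(α, β)) for all α, β ∈ X₀, and l̂₂ satisfies: (i) l̂₂(d̄ k, h) ∈ range d̄ for all k ∈ Y₁, h ∈ Y₀, and (ii) the Jacobiator of l̂₂ lies in range d̄ for all arguments. (This is the algebraic core of the paper's Theorem that the reduced map l̂₂ on Ωⁿ⁻ᑫ,⁰_c(J^∞Ē) is well defined and satisfies the hypotheses guaranteeing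 an sh-Lie structure on the reduced complex.) -/
import Mathlib


theorem reduced_bracket_exists_unique (R : Type*) [Field R]
    (X₁ X₀ Y₁ Y₀ : Type*)
    [AddCommGroup X₁] [Module R X₁] [AddCommGroup X₀] [Module R X₀]
    [AddCommGroup Y₁] [Module R Y₁] [AddCommGroup Y₀] [Module R Y₀]
    (d : X₁ →ₗ[R] X₀) (dbar : Y₁ →ₗ[R] Y₀)
    (ρ₁ : X₁ →ₗ[R] Y₁) (ρ₀ : X₀ →ₗ[R] Y₀)
    (hρ₁ : Function.Surjective ρ₁) (hρ₀ : Function.Surjective ρ₀)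
    (hcochain : ∀ k : X₁, ρ₀ (d k) = dbar (ρ₁ k))
    (l₂ : X₀ →ₗ[R] X₀ →ₗ[R] X₀)
    (hskew : ∀ x y : X₀, l₂ x y = -l₂ y x)
    (ha : ∀ (k : X₁) (h : X₀), l₂ (d k) h ∈ LinearMap.range d)
    (hb : ∀ x y z : X₀, l₂ (l₂ x y) z + l₂ (l₂ y z) x + l₂ (l₂ z x) y ∈ LinearMap.range d)
    (hc : ∀ α α' β : X₀, ρ₀ α = ρ₀ α' → ρ₀ (l₂ α β) = ρ₀ (l₂ α' β)) :
    ∃ lhat : Y₀ →ₗ[R] Y₀ →ₗ[R] Y₀,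
      (∀ α β : X₀, lhat (ρ₀ α) (ρ₀ β) = ρ₀ (l₂ α β))
      ∧ (∀ a b : Y₀, lhat a b = -lhat b a)
      ∧ (∀ (k : Y₁) (h : Y₀), lhat (dbar k) h ∈ LinearMap.range dbar)
      ∧ (∀ a b c : Y₀,
          lhat (lhat a b) c + lhat (lhat b c) a + lhat (lhat c a) b ∈ LinearMap.range dbar)
      ∧ (∀ lhat' : Y₀ →ₗ[R] Y₀ →ₗ[R] Y₀,
          (∀ a b : Y₀, lhat' a b = -lhat' b a) →
          (∀ α β : X₀, lhat' (ρ₀ α) (ρ₀ β) = ρ₀ (l₂ α β)) → lhat' = lhat) := by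
  -- well-definedness in both arguments
  have key : ∀ α α' β β' : X₀, ρ₀ α = ρ₀ α' → ρ₀ β = ρ₀ β' →
      ρ₀ (l₂ α β) = ρ₀ (l₂ α' β') := by
    intro α α' β β' h1 h2
    have step1 : ρ₀ (l₂ α β) = ρ₀ (l₂ α' β) := hc _ _ _ h1
    have step2 : ρ₀ (l₂ α' β) = ρ₀ (l₂ α' β') := by
      have := hc β β' α' h2
      rw [hskew β α', hskew β' α'] at this
      simpa using this
    rw [step1, step2]
  set s : Y₀ → X₀ := Function.surjInv hρ₀ with hs
  have hsρ : ∀ y : Y₀, ρ₀ (s y) = y := fun y => Function.surjInv_eq hρ₀ y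
  have keys : ∀ (α β : X₀), ρ₀ (l₂ (s (ρ₀ α)) (s (ρ₀ β))) = ρ₀ (l₂ α β) := by
    intro α β; exact key _ _ _ _ (hsρ _) (hsρ _)
  refine ⟨LinearMap.mk₂ R (fun a b => ρ₀ (l₂ (s a) (s b)))
    (fun a a' b => ?_) (fun r a b => ?_) (fun a b b' => ?_) (fun r a b => ?_), ?_, ?_, ?_, ?_, ?_⟩
  · show ρ₀ (l₂ (s (a + a')) (s b)) = ρ₀ (l₂ (s a) (s b)) + ρ₀ (l₂ (s a') (s b))
    have : ρ₀ (s (a + a')) = ρ₀ (s a + s a') := by simp [hsρ]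
    rw [key _ _ _ _ this rfl]; simp
  · show ρ₀ (l₂ (s (r • a)) (s b)) = r • ρ₀ (l₂ (s a) (s b))
    have : ρ₀ (s (r • a)) = ρ₀ (r • s a) := by simp [hsρ]
    rw [key _ _ _ _ this rfl]; simp
  · show ρ₀ (l₂ (s a) (s (b + b'))) = ρ₀ (l₂ (s a) (s b)) + ρ₀ (l₂ (s a) (s b'))
    have : ρ₀ (s (b + b')) = ρ₀ (s b + s b') := by simp [hsρ]
    rw [key _ _ _ _ rfl this]; simp
  · show ρ₀ (l₂ (s a) (s (r • b))) = r • ρ₀ (l₂ (s a) (s b))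
    have : ρ₀ (s (r • b)) = ρ₀ (r • s b) := by simp [hsρ]
    rw [key _ _ _ _ rfl this]; simp
  · intro α β
    simpa using key _ _ _ _ (hsρ (ρ₀ α)) (hsρ (ρ₀ β))
  · intro a b
    simp only [LinearMap.mk₂_apply]
    rw [hskew]; simp
  · intro k h
    obtain ⟨k', hk'⟩ := hρ₁ k
    have h1 : ρ₀ (d k') = dbar k := by rw [hcochain, hk']
    obtain ⟨m, hm⟩ := ha k' (s h)
    have : ρ₀ (l₂ (s (dbar k)) (s h)) = ρ₀ (l₂ (d k') (s h)) :=
      key _ _ _ _ (by rw [hsρ, h1]) rfl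
    simp only [LinearMap.mk₂_apply, this, ← hm, hcochain]
    exact ⟨ρ₁ m, rfl⟩
  · intro a b c
    simp only [LinearMap.mk₂_apply]
    have e1 : ρ₀ (l₂ (s (ρ₀ (l₂ (s a) (s b)))) (s c)) = ρ₀ (l₂ (l₂ (s a) (s b)) (s c)) :=
      key _ _ _ _ (hsρ _) rfl
    have e2 : ρ₀ (l₂ (s (ρ₀ (l₂ (s b) (s c)))) (s a)) = ρ₀ (l₂ (l₂ (s b) (s c)) (s a)) :=
      key _ _ _ _ (hsρ _) rfl
    have e3 : ρ₀ (l₂ (s (ρ₀ (l₂ (s c) (s a)))) (s b)) = ρ₀ (l₂ (l₂ (s c) (s a)) (s b)) :=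
      key _ _ _ _ (hsρ _) rfl
    rw [e1, e2, e3, ← map_add, ← map_add]
    obtain ⟨m, hm⟩ := hb (s a) (s b) (s c)
    rw [← hm, hcochain]
    exact ⟨ρ₁ m, rfl⟩
  · intro lhat' _ hcompat
    ext a b
    obtain ⟨α, rfl⟩ := hρ₀ a
    obtain ⟨β, rfl⟩ := hρ₀ b
    simp only [LinearMap.mk₂_apply, hcompat α β, keys]
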